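/- arXiv:1601.07638 — 2 statements merged into one kernel-verified Lean document; each statement's English description precedes it below -/
import Mathlib

section
/- Let g be a finite-dimensional complex Lie algebra with a nondegenerate symmetric invariant bilinear form ⟨·,·⟩, let X¹,…,X^d and X₁,…,X_d be bases of g dual with respect to this form, and let π : g → End V be a finite-dimensional representation. Then in End V ⊗ End V ⊗ U(g) the identity G₁G₂ − G₂G₁ = −Ω G₂ + G₂ Ω holds, and equivalently G₁G₂ − G₂G₁ = Ω G₁ − G₁ Ω. Moreover, if π is faithful, these matrix relations are equivalent to the defining commutation relations [X_i,X_j] = Σ_k c_{ij}^k X_k of U(g). -/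
noncomputable section

set_option maxHeartbeats 1000000

open scoped TensorProduct

attribute [local instance 100] LieRing.ofAssociativeRing

section General

variable (L : Type) [LieRing L] [LieAlgebra ℂ L]
variable (V : Type) [AddCommGroup V] [Module ℂ V]

/-- `G₁ = Σᵢ π(Xⁱ) ⊗ 1 ⊗ φ(Xᵢ) ∈ End V ⊗ End V ⊗ A`, for a linear map
`φ : g → A` playing the role of the generators `Xᵢ` of `U(g)`. -/
def G1gen (A : Type) [Ring A] [Algebra ℂ A] (π : L →ₗ⁅ℂ⁆ Module.End ℂ V)
    (d : ℕ) (bX : Fin d → L) (Xlo : Fin d → L) (φ : L →ₗ[ℂ] A) :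
    Module.End ℂ V ⊗[ℂ] (Module.End ℂ V ⊗[ℂ] A) :=
  ∑ i : Fin d, π (bX i) ⊗ₜ[ℂ] ((1 : Module.End ℂ V) ⊗ₜ[ℂ] φ (Xlo i))

/-- `G₂ = Σᵢ 1 ⊗ π(Xⁱ) ⊗ φ(Xᵢ) ∈ End V ⊗ End V ⊗ A`. -/
def G2gen (A : Type) [Ring A] [Algebra ℂ A] (π : L →ₗ⁅ℂ⁆ Module.End ℂ V)
    (d : ℕ) (bX : Fin d → L) (Xlo : Fin d → L) (φ : L →ₗ[ℂ] A) :
    Module.End ℂ V ⊗[ℂ] (Module.End ℂ V ⊗[ℂ] A) :=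
  ∑ i : Fin d, (1 : Module.End ℂ V) ⊗ₜ[ℂ] (π (bX i) ⊗ₜ[ℂ] φ (Xlo i))

/-- `Ω = Σᵢ π(Xⁱ) ⊗ π(Xᵢ) ⊗ 1 ∈ End V ⊗ End V ⊗ A`. -/
def OmGen (A : Type) [Ring A] [Algebra ℂ A] (π : L →ₗ⁅ℂ⁆ Module.End ℂ V)
    (d : ℕ) (bX : Fin d → L) (Xlo : Fin d → L) :
    Module.End ℂ V ⊗[ℂ] (Module.End ℂ V ⊗[ℂ] A) :=
  ∑ i : Fin d, π (bX i) ⊗ₜ[ℂ] (π (Xlo i) ⊗ₜ[ℂ] (1 : A))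

/-- The matrix relation `G₁G₂ − G₂G₁ = −ΩG₂ + G₂Ω` for a linear map `φ : g → A`. -/
def MatRel (A : Type) [Ring A] [Algebra ℂ A] (π : L →ₗ⁅ℂ⁆ Module.End ℂ V)
    (d : ℕ) (bX : Fin d → L) (Xlo : Fin d → L) (φ : L →ₗ[ℂ] A) : Prop :=
  G1gen L V A π d bX Xlo φ * G2gen L V A π d bX Xlo φ -
      G2gen L V A π d bX Xlo φ * G1gen L V A π d bX Xlo φ =
    -(OmGen L V A π d bX Xlo * G2gen L V A π d bX Xlo φ) +
      G2gen L V A π d bX Xlo φ * OmGen L V A π d bX Xlo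

/-- The equivalent matrix relation `G₁G₂ − G₂G₁ = ΩG₁ − G₁Ω`. -/
def MatRel' (A : Type) [Ring A] [Algebra ℂ A] (π : L →ₗ⁅ℂ⁆ Module.End ℂ V)
    (d : ℕ) (bX : Fin d → L) (Xlo : Fin d → L) (φ : L →ₗ[ℂ] A) : Prop :=
  G1gen L V A π d bX Xlo φ * G2gen L V A π d bX Xlo φ -
      G2gen L V A π d bX Xlo φ * G1gen L V A π d bX Xlo φ =
    OmGen L V A π d bX Xlo * G1gen L V A π d bX Xlo φ -
      G1gen L V A π d bX Xlo φ * OmGen L V A π d bX Xlo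

end General

/-! Because the form is invariant, the Casimir tensor `Σᵢ Xⁱ ⊗ Xᵢ` is ad-invariant; here `Xᵢ`
is the dual family of the basis `Xⁱ`, which is again a basis. Multiplying out,
`G₁G₂ − G₂G₁ = Σᵢⱼ π(Xⁱ) ⊗ π(Xʲ) ⊗ [φXᵢ, φXⱼ]`, and ad-invariance turns both `−ΩG₂ + G₂Ω` and
`ΩG₁ − G₁Ω` into `Σᵢⱼ π(Xⁱ) ⊗ π(Xʲ) ⊗ φ[Xᵢ, Xⱼ]`. If `π` is injective, `π ⊗ π ⊗ 1` has a left
inverse, so the matrix relation gives `[φXᵢ, φXⱼ] = φ[Xᵢ, Xⱼ]` on a basis, hence everywhere. -/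

namespace LinearMap.BilinForm

section DualFamily

variable {K L ι : Type*} [Field K] [AddCommGroup L] [Module K L] [DecidableEq ι]
  {B : LinearMap.BilinForm K L} {b : Module.Basis ι K L} {b' : ι → L}
  (hdual : ∀ i j, B (b i) (b' j) = if i = j then 1 else 0)
include hdual

lemma flip_apply_eq_coord_of_dual (k : ι) : B.flip (b' k) = b.coord k :=
  b.ext fun i => by simp [hdual, Finsupp.single_apply]

variable [Fintype ι]

lemma linearIndependent_of_dual : LinearIndependent K b' := by
  rw [Fintype.linearIndependent_iff]
  intro c hc i
  simpa [hdual] using congrArg (B (b i)) hc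

def basisOfDual : Module.Basis ι K L :=
  haveI := Module.Finite.of_basis b
  basisOfLinearIndependentOfCardEqFinrank' b' (linearIndependent_of_dual hdual)
    (Module.finrank_eq_card_basis b).symm

@[simp]
lemma coe_basisOfDual : ⇑(basisOfDual hdual) = b' := by
  simp [basisOfDual]

lemma apply_eq_coord_basisOfDual (k : ι) : B (b k) = (basisOfDual hdual).coord k :=
  (basisOfDual hdual).ext fun j => by
    have := (basisOfDual hdual).repr_self j
    rw [coe_basisOfDual] at this
    simp [hdual, this, Finsupp.single_apply, eq_comm]

lemma sum_apply_dual_smul (X : L) : ∑ k, B X (b' k) • b k = X := by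
  simp_rw [← B.flip_apply, flip_apply_eq_coord_of_dual hdual, Module.Basis.coord_apply]
  exact b.sum_repr X

lemma sum_apply_smul_dual (X : L) : ∑ k, B (b k) X • b' k = X := by
  simp_rw [apply_eq_coord_basisOfDual hdual, Module.Basis.coord_apply]
  simpa using (basisOfDual hdual).sum_repr X

end DualFamily

variable {K L ι : Type*} [Field K] [LieRing L] [LieAlgebra K L] [Fintype ι] [DecidableEq ι]
  {B : LinearMap.BilinForm K L} {b : Module.Basis ι K L} {b' : ι → L}
  (hdual : ∀ i j, B (b i) (b' j) = if i = j then 1 else 0)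
include hdual

lemma sum_lie_tmul_eq_sum_tmul_lie (hinv : ∀ X Y Z : L, B ⁅X, Y⁆ Z = B X ⁅Y, Z⁆) (Y : L) :
    ∑ i, ⁅b i, Y⁆ ⊗ₜ[K] b' i = ∑ i, b i ⊗ₜ[K] ⁅Y, b' i⁆ :=
  calc ∑ i, ⁅b i, Y⁆ ⊗ₜ[K] b' i
      = ∑ i, ∑ k, B ⁅b i, Y⁆ (b' k) • (b k ⊗ₜ[K] b' i) := by
        refine Finset.sum_congr rfl fun i _ => ?_
        conv_lhs => rw [← sum_apply_dual_smul hdual ⁅b i, Y⁆]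
        simp only [TensorProduct.sum_tmul, TensorProduct.smul_tmul']
    _ = ∑ i, ∑ k, B (b i) ⁅Y, b' k⁆ • (b k ⊗ₜ[K] b' i) := by simp only [hinv]
    _ = ∑ k, b k ⊗ₜ[K] ⁅Y, b' k⁆ := by
        rw [Finset.sum_comm]
        refine Finset.sum_congr rfl fun k _ => ?_
        conv_rhs => rw [← sum_apply_smul_dual hdual ⁅Y, b' k⁆]
        simp only [TensorProduct.tmul_sum, TensorProduct.tmul_smul]

end LinearMap.BilinForm

lemma Module.Basis.eq_zero_of_sum_tmul_eq_zero {R M N ι : Type*} [CommRing R] [AddCommGroup M]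
    [Module R M] [AddCommGroup N] [Module R N] [Fintype ι] (b : Module.Basis ι R M) {s : ι → N}
    (h : ∑ i, b i ⊗ₜ[R] s i = 0) (k : ι) : s k = 0 := by
  classical
  simpa [Finsupp.single_apply] using
    congrArg (fun x => TensorProduct.equivFinsuppOfBasisLeft b x k) h

lemma eq_zero_of_sum_tmul_tmul_eq_zero {K M M' N ι : Type*} [Field K] [AddCommGroup M]
    [Module K M] [AddCommGroup M'] [Module K M'] [AddCommGroup N] [Module K N] [Fintype ι]
    (f : M →ₗ[K] M') (hf : Function.Injective f) (b : Module.Basis ι K M) {a : ι → ι → N}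
    (h : ∑ i, ∑ j, f (b i) ⊗ₜ[K] (f (b j) ⊗ₜ[K] a i j) = 0) (i j : ι) : a i j = 0 := by
  obtain ⟨g, hg⟩ := f.exists_leftInverse_of_injective (LinearMap.ker_eq_bot.mpr hf)
  have hgf : ∀ x, g (f x) = x := LinearMap.congr_fun hg
  have h' : ∑ i, b i ⊗ₜ[K] ∑ j, b j ⊗ₜ[K] a i j = 0 := by
    simpa [map_sum, TensorProduct.tmul_sum, hgf] using
      congrArg (TensorProduct.map g (TensorProduct.map g LinearMap.id)) h
  exact b.eq_zero_of_sum_tmul_eq_zero (b.eq_zero_of_sum_tmul_eq_zero h' i) j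

lemma LinearMap.map_lie_of_basis {K L A ι : Type*} [CommRing K] [LieRing L] [LieAlgebra K L]
    [Ring A] [Algebra K A] (c : Module.Basis ι K L) (φ : L →ₗ[K] A)
    (h : ∀ i j, φ ⁅c i, c j⁆ = ⁅φ (c i), φ (c j)⁆) (X Y : L) : φ ⁅X, Y⁆ = ⁅φ X, φ Y⁆ := by
  have := LinearMap.ext_basis c c
    (B := (LieModule.toEnd K L L : L →ₗ[K] Module.End K L).compr₂ φ)
    (B' := (LieModule.toEnd K A A : A →ₗ[K] Module.End K A).compl₁₂ φ φ) (by simpa using h)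
  simpa using LinearMap.congr_fun₂ this X Y

section MatrixRelations

variable {L V A : Type} [LieRing L] [LieAlgebra ℂ L] [AddCommGroup V] [Module ℂ V] [Ring A]
  [Algebra ℂ A] (π : L →ₗ⁅ℂ⁆ Module.End ℂ V) {d : ℕ}

section Products

variable (bX Xlo : Fin d → L) (φ : L →ₗ[ℂ] A)

-- `Finset.sum_mul_sum` is given its ring explicitly: the ring structure of the triple tensor
-- product is not found by unification.
lemma G1gen_mul_G2gen_sub_G2gen_mul_G1gen :
    G1gen L V A π d bX Xlo φ * G2gen L V A π d bX Xlo φ -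
        G2gen L V A π d bX Xlo φ * G1gen L V A π d bX Xlo φ =
      ∑ i, ∑ j, π (bX i) ⊗ₜ[ℂ] (π (bX j) ⊗ₜ[ℂ] ⁅φ (Xlo i), φ (Xlo j)⁆) := by
  simp only [G1gen, G2gen, Finset.sum_mul_sum (R := Module.End ℂ V ⊗[ℂ] (Module.End ℂ V ⊗[ℂ] A)),
    Algebra.TensorProduct.tmul_mul_tmul, one_mul, mul_one]
  conv_lhs => rhs; rw [Finset.sum_comm]
  simp only [← Finset.sum_sub_distrib, ← TensorProduct.tmul_sub, Ring.lie_def]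

lemma neg_OmGen_mul_G2gen_add_G2gen_mul_OmGen :
    -(OmGen L V A π d bX Xlo * G2gen L V A π d bX Xlo φ) +
        G2gen L V A π d bX Xlo φ * OmGen L V A π d bX Xlo =
      ∑ i, ∑ j, π (bX i) ⊗ₜ[ℂ] (π ⁅bX j, Xlo i⁆ ⊗ₜ[ℂ] φ (Xlo j)) := by
  simp only [OmGen, G2gen, Finset.sum_mul_sum (R := Module.End ℂ V ⊗[ℂ] (Module.End ℂ V ⊗[ℂ] A)),
    Algebra.TensorProduct.tmul_mul_tmul, one_mul, mul_one]
  rw [neg_add_eq_sub, Finset.sum_comm]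
  simp only [← Finset.sum_sub_distrib, ← TensorProduct.tmul_sub, ← TensorProduct.sub_tmul,
    LieHom.map_lie, Ring.lie_def]

lemma OmGen_mul_G1gen_sub_G1gen_mul_OmGen :
    OmGen L V A π d bX Xlo * G1gen L V A π d bX Xlo φ -
        G1gen L V A π d bX Xlo φ * OmGen L V A π d bX Xlo =
      ∑ i, ∑ j, π ⁅bX i, bX j⁆ ⊗ₜ[ℂ] (π (Xlo i) ⊗ₜ[ℂ] φ (Xlo j)) := by
  simp only [OmGen, G1gen, Finset.sum_mul_sum (R := Module.End ℂ V ⊗[ℂ] (Module.End ℂ V ⊗[ℂ] A)),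
    Algebra.TensorProduct.tmul_mul_tmul, one_mul, mul_one]
  conv_lhs => rhs; rw [Finset.sum_comm]
  simp only [← Finset.sum_sub_distrib, ← TensorProduct.sub_tmul, LieHom.map_lie, Ring.lie_def]

end Products

variable {B : LinearMap.BilinForm ℂ L} {bX : Module.Basis (Fin d) ℂ L} {Xlo : Fin d → L}
  (φ : L →ₗ[ℂ] A) (hinv : ∀ X Y Z : L, B ⁅X, Y⁆ Z = B X ⁅Y, Z⁆)
  (hdual : ∀ i j, B (bX i) (Xlo j) = if i = j then 1 else 0)
include hinv hdual

lemma sum_tmul_lie_tmul_eq_sum_tmul_tmul_lie :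
    ∑ i, ∑ j, π (bX i) ⊗ₜ[ℂ] (π ⁅bX j, Xlo i⁆ ⊗ₜ[ℂ] φ (Xlo j)) =
      ∑ i, ∑ j, π (bX i) ⊗ₜ[ℂ] (π (bX j) ⊗ₜ[ℂ] φ ⁅Xlo i, Xlo j⁆) :=
  Finset.sum_congr rfl fun i _ => by
    simpa [map_sum] using
      congrArg (TensorProduct.mk ℂ _ _ (π (bX i)) ∘ₗ TensorProduct.map π.toLinearMap φ)
        (LinearMap.BilinForm.sum_lie_tmul_eq_sum_tmul_lie hdual hinv (Xlo i))

lemma sum_lie_tmul_tmul_eq_sum_tmul_lie_tmul :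
    ∑ i, ∑ j, π ⁅bX i, bX j⁆ ⊗ₜ[ℂ] (π (Xlo i) ⊗ₜ[ℂ] φ (Xlo j)) =
      ∑ i, ∑ j, π (bX i) ⊗ₜ[ℂ] (π ⁅bX j, Xlo i⁆ ⊗ₜ[ℂ] φ (Xlo j)) := by
  refine Finset.sum_comm.trans (Eq.trans (Finset.sum_congr rfl fun j _ => ?_) Finset.sum_comm)
  simpa [map_sum] using
    congrArg (TensorProduct.map π.toLinearMap
        ((TensorProduct.mk ℂ _ A).flip (φ (Xlo j)) ∘ₗ π.toLinearMap))
      (LinearMap.BilinForm.sum_lie_tmul_eq_sum_tmul_lie hdual hinv (bX j))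

lemma matRel_iff :
    MatRel L V A π d bX Xlo φ ↔
      ∑ i, ∑ j,
        π (bX i) ⊗ₜ[ℂ] (π (bX j) ⊗ₜ[ℂ] (⁅φ (Xlo i), φ (Xlo j)⁆ - φ ⁅Xlo i, Xlo j⁆)) = 0 := by
  rw [MatRel, G1gen_mul_G2gen_sub_G2gen_mul_G1gen, neg_OmGen_mul_G2gen_add_G2gen_mul_OmGen,
    sum_tmul_lie_tmul_eq_sum_tmul_tmul_lie π φ hinv hdual, ← sub_eq_zero]
  simp only [← Finset.sum_sub_distrib, ← TensorProduct.tmul_sub]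

lemma matRel'_iff_matRel : MatRel' L V A π d bX Xlo φ ↔ MatRel L V A π d bX Xlo φ := by
  rw [MatRel, MatRel', OmGen_mul_G1gen_sub_G1gen_mul_OmGen,
    neg_OmGen_mul_G2gen_add_G2gen_mul_OmGen,
    sum_lie_tmul_tmul_eq_sum_tmul_lie_tmul π φ hinv hdual]

lemma matRel_of_forall_map_lie (h : ∀ X Y, φ ⁅X, Y⁆ = ⁅φ X, φ Y⁆) :
    MatRel L V A π d bX Xlo φ := by
  simp [matRel_iff π φ hinv hdual, h]

lemma forall_map_lie_of_matRel (hπ : Function.Injective π) (h : MatRel L V A π d bX Xlo φ) :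
    ∀ X Y, φ ⁅X, Y⁆ = ⁅φ X, φ Y⁆ := by
  refine LinearMap.map_lie_of_basis (LinearMap.BilinForm.basisOfDual hdual) φ fun i j => ?_
  rw [LinearMap.BilinForm.coe_basisOfDual]
  exact (sub_eq_zero.1 <| eq_zero_of_sum_tmul_tmul_eq_zero π.toLinearMap hπ bX
    ((matRel_iff π φ hinv hdual).1 h) i j).symm

end MatrixRelations

theorem matrix_presentation_of_U_general
    (L : Type) [LieRing L] [LieAlgebra ℂ L]
    (V : Type) [AddCommGroup V] [Module ℂ V]
    (B : LinearMap.BilinForm ℂ L)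
    (hinv : ∀ X Y Z : L, B ⁅X, Y⁆ Z = B X ⁅Y, Z⁆)
    (d : ℕ) (bX : Module.Basis (Fin d) ℂ L) (Xlo : Fin d → L)
    (hdual : ∀ i j, B (bX i) (Xlo j) = if i = j then 1 else 0)
    (π : L →ₗ⁅ℂ⁆ Module.End ℂ V) :
    MatRel L V (UniversalEnvelopingAlgebra ℂ L) π d bX Xlo
        (UniversalEnvelopingAlgebra.ι ℂ).toLinearMap ∧
    MatRel' L V (UniversalEnvelopingAlgebra ℂ L) π d bX Xlo
        (UniversalEnvelopingAlgebra.ι ℂ).toLinearMap ∧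
    (Function.Injective π →
      ∀ (A : Type) [Ring A] [Algebra ℂ A] (φ : L →ₗ[ℂ] A),
        MatRel L V A π d bX Xlo φ ↔
          ∀ X Y : L, φ ⁅X, Y⁆ = φ X * φ Y - φ Y * φ X) := by
  have hU : MatRel L V (UniversalEnvelopingAlgebra ℂ L) π d bX Xlo
      (UniversalEnvelopingAlgebra.ι ℂ).toLinearMap :=
    matRel_of_forall_map_lie π _ hinv hdual (UniversalEnvelopingAlgebra.ι ℂ).map_lie
  refine ⟨hU, (matRel'_iff_matRel π _ hinv hdual).2 hU, fun hπ A _ _ φ => ?_⟩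
  simp only [← Ring.lie_def]
  exact ⟨forall_map_lie_of_matRel π φ hinv hdual hπ, matRel_of_forall_map_lie π φ hinv hdual⟩

/-- for a finite-dimensional complex Lie algebra `g` with a nondegenerate
symmetric invariant bilinear form, dual bases `X¹,…,X^d` and `X₁,…,X_d`, and a
finite-dimensional representation `π : g → End V`, the identities
`G₁G₂ − G₂G₁ = −ΩG₂ + G₂Ω = ΩG₁ − G₁Ω` hold in `End V ⊗ End V ⊗ U(g)` (with `φ = ι`
the canonical embedding); moreover if `π` is faithful then, for an arbitrary complex
algebra `A` and linear map `φ : g → A`, the matrix relation holds iff `φ` respects the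
defining commutation relations `[Xᵢ,Xⱼ] = Σₖ c_{ij}^k Xₖ` of `U(g)`. -/
theorem matrix_presentation_of_U
    (L : Type) [LieRing L] [LieAlgebra ℂ L] [Module.Finite ℂ L]
    (V : Type) [AddCommGroup V] [Module ℂ V] [Module.Finite ℂ V]
    (B : LinearMap.BilinForm ℂ L)
    (hsym : ∀ X Y : L, B X Y = B Y X)
    (hinv : ∀ X Y Z : L, B ⁅X, Y⁆ Z = B X ⁅Y, Z⁆)
    (hnd : B.Nondegenerate)
    (d : ℕ) (bX : Module.Basis (Fin d) ℂ L) (Xlo : Fin d → L)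
    (hdual : ∀ i j, B (bX i) (Xlo j) = if i = j then 1 else 0)
    (π : L →ₗ⁅ℂ⁆ Module.End ℂ V) :
    MatRel L V (UniversalEnvelopingAlgebra ℂ L) π d bX Xlo
        (UniversalEnvelopingAlgebra.ι ℂ).toLinearMap ∧
    MatRel' L V (UniversalEnvelopingAlgebra ℂ L) π d bX Xlo
        (UniversalEnvelopingAlgebra.ι ℂ).toLinearMap ∧
    (Function.Injective π →
      ∀ (A : Type) [Ring A] [Algebra ℂ A] (φ : L →ₗ[ℂ] A),
        MatRel L V A π d bX Xlo φ ↔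
          ∀ X Y : L, φ ⁅X, Y⁆ = φ X * φ Y - φ Y * φ X) :=
  matrix_presentation_of_U_general L V B hinv d bX Xlo hdual π
end
end

section
/- The element Ω = Σ_{i=1}^{14} Xⁱ ⊗ X_i ∈ End(ℂ⁷) ⊗ End(ℂ⁷) satisfies Ω = 1 + P − 2Q − T. -/
/-!
Since `⟨X, Y⟩ = (1/6) tr XY` is symmetric, a family in the span of `X¹, …, X¹⁴` that is dual to
them is unique, so `X₁, …, X₁₄` are the integer combinations of the `Xⁱ` obtained by inverting their
Gram matrix. Then `2Xⁱ`, `2Xᵢ` and `β` have entries in `ℤ[√2]`, so both the duality and the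
identity are finite computations in `ℤ√2`, done by kernel evaluation and carried to `ℂ` along the
ring map `√2 ↦ √2`.
-/

noncomputable section

open scoped TensorProduct

/-- The algebra of 7×7 complex matrices, `End (ℂ⁷)`. -/
abbrev M7 : Type := Matrix (Fin 7) (Fin 7) ℂ

/-- `i ↦ i' = 8 - i` in the 1-based labelling of the paper (0-based: `i ↦ 6 - i`). -/
def pr7 (i : Fin 7) : Fin 7 := ⟨6 - (i : ℕ), by omega⟩

/-- `f_{ij} = e_{ij} - e_{j'i'}`. -/
def fml (i j : Fin 7) : M7 :=
  Matrix.single i j 1 - Matrix.single (pr7 j) (pr7 i) 1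

/-- `√2` as a complex number. -/
def sq2 : ℂ := (Real.sqrt 2 : ℝ)

/-- The basis `X¹, …, X¹⁴` of the matrix Lie algebra of type `G₂` (0-based indices). -/
def XB : Fin 14 → M7 :=
  ![fml 0 0 - fml 1 1,
    fml 1 1 - fml 2 2,
    fml 0 1, fml 0 2, fml 1 0, fml 1 2, fml 2 0, fml 2 1,
    fml 0 3 - sq2⁻¹ • fml 4 1,
    fml 1 3 - sq2⁻¹ • fml 6 2,
    fml 2 3 - sq2⁻¹ • fml 5 0,
    fml 3 0 - sq2⁻¹ • fml 1 4,
    fml 3 1 - sq2⁻¹ • fml 2 6,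
    fml 3 2 - sq2⁻¹ • fml 0 5]

/-- The invariant bilinear form `⟨X, Y⟩ = (1/6) tr (XY)`. -/
def formG (X Y : M7) : ℂ := 6⁻¹ * (X * Y).trace

attribute [local instance] LieRing.ofAssociativeRing

/-- The simple Lie algebra of type `G₂`, realized as the Lie subalgebra of `gl₇(ℂ)`
generated (equivalently, spanned) by `X¹, …, X¹⁴`. -/
def g2 : LieSubalgebra ℂ M7 := LieSubalgebra.lieSpan ℂ M7 (Set.range XB)

/-- `Xⁱ` as an element of `g₂`. -/
def XBg (i : Fin 14) : g2 := ⟨XB i, LieSubalgebra.subset_lieSpan (Set.mem_range_self i)⟩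

/-- The coefficient function of the wedge `e_a ∧ e_b ∧ e_c ∈ (ℂ⁷)^{⊗3}`. -/
def w3 (a b c : Fin 7) : Fin 7 → Fin 7 → Fin 7 → ℂ := fun i j k =>
  (if (i, j, k) = (a, b, c) then 1 else 0) + (if (i, j, k) = (b, c, a) then 1 else 0)
    + (if (i, j, k) = (c, a, b) then 1 else 0) - (if (i, j, k) = (b, a, c) then 1 else 0)
    - (if (i, j, k) = (a, c, b) then 1 else 0) - (if (i, j, k) = (c, b, a) then 1 else 0)

/-- The coefficients `β_{ijk}` of the invariant 3-form
`β = Σ_{i=1}^{3} e_i ∧ e₄ ∧ e_{i'} + √2 e₁∧e₂∧e₃ + √2 e₅∧e₆∧e₇` (1-based labels). -/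
def betaC : Fin 7 → Fin 7 → Fin 7 → ℂ := fun i j k =>
  w3 0 3 6 i j k + w3 1 3 5 i j k + w3 2 3 4 i j k
    + sq2 * w3 0 1 2 i j k + sq2 * w3 4 5 6 i j k


open Kronecker in
/-- The operator `P = Σ e_{ij} ⊗ e_{ji}` on `ℂ⁷ ⊗ ℂ⁷`. -/
def PP : Matrix (Fin 7 × Fin 7) (Fin 7 × Fin 7) ℂ :=
  ∑ i : Fin 7, ∑ j : Fin 7,
    Matrix.single i j (1 : ℂ) ⊗ₖ Matrix.single j i (1 : ℂ)

open Kronecker in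
/-- The operator `Q = Σ e_{ij} ⊗ e_{i'j'}` on `ℂ⁷ ⊗ ℂ⁷`. -/
def QQ : Matrix (Fin 7 × Fin 7) (Fin 7 × Fin 7) ℂ :=
  ∑ i : Fin 7, ∑ j : Fin 7,
    Matrix.single i j (1 : ℂ) ⊗ₖ Matrix.single (pr7 i) (pr7 j) (1 : ℂ)

open Kronecker in
/-- The operator `T = Σ_{i,j,k,l,a} β_{ika} β_{jla} e_{ij} ⊗ e_{kl}` on `ℂ⁷ ⊗ ℂ⁷`. -/
def TT : Matrix (Fin 7 × Fin 7) (Fin 7 × Fin 7) ℂ :=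
  ∑ i : Fin 7, ∑ j : Fin 7, ∑ k : Fin 7, ∑ l : Fin 7,
    (∑ a : Fin 7, betaC i k a * betaC j l a) •
      (Matrix.single i j (1 : ℂ) ⊗ₖ Matrix.single k l (1 : ℂ))



open Matrix Kronecker Submodule

theorem LinearMap.BilinForm.IsSymm.eq_of_dual_of_mem_span {R M ι : Type*} [CommRing R]
    [AddCommGroup M] [Module R M] [Fintype ι] [DecidableEq ι] {φ : LinearMap.BilinForm R M}
    (hφ : φ.IsSymm) {B D X : ι → M}
    (hD : ∀ j, D j ∈ span R (Set.range B)) (hBD : ∀ i j, φ (B i) (D j) = if i = j then 1 else 0)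
    (hX : ∀ j, X j ∈ span R (Set.range B)) (hBX : ∀ i j, φ (B i) (X j) = if i = j then 1 else 0) :
    X = D := by
  funext j
  obtain ⟨c, hc⟩ := (mem_span_range_iff_exists_fun R).1 (sub_mem (hX j) (hD j))
  have hB : ∀ i, φ (B i) (X j - D j) = 0 := fun i => by simp [hBD, hBX]
  have hspan : span R (Set.range B) ≤ LinearMap.ker (φ.flip (X j - D j)) :=
    span_le.2 (by rintro _ ⟨i, rfl⟩; exact hB i)
  have hc0 : ∀ m, c m = 0 := fun m => by
    have := hspan (hD m)
    change φ (D m) (X j - D j) = 0 at this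
    rw [← hc, map_sum] at this
    simpa [← hφ.eq (B _), hBD, eq_comm] using this
  rw [← sub_eq_zero, ← hc]
  simp [hc0]

theorem sq2_mul_self : sq2 * sq2 = 2 := by
  rw [sq2, ← Complex.ofReal_mul, Real.mul_self_sqrt zero_le_two, Complex.ofReal_ofNat]

def traceForm : LinearMap.BilinForm ℂ M7 :=
  (6⁻¹ : ℂ) • (LinearMap.mul ℂ M7).compr₂ (traceLinearMap (Fin 7) ℂ ℂ)

theorem traceForm_apply (X Y : M7) : traceForm X Y = formG X Y := rfl

theorem traceForm_isSymm : traceForm.IsSymm :=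
  ⟨fun X Y => by simp only [traceForm_apply, formG, trace_mul_comm X Y]⟩

/-- The Gram matrix of `XB` under `formG` is `(1/3) [[2,-1],[-1,2]]` on the Cartan part and pairs
each root vector with its opposite, with value `1/3` for long and `1/2` for short roots; inverting
it gives these combinations. -/
def dualCombo {M : Type*} [AddCommGroup M] (X : Fin 14 → M) : Fin 14 → M :=
  ![2 • X 0 + X 1, X 0 + 2 • X 1, 3 • X 4, 3 • X 6, 3 • X 2, 3 • X 7, 3 • X 3, 3 • X 5,
    2 • X 11, 2 • X 12, 2 • X 13, 2 • X 8, 2 • X 9, 2 • X 10]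

theorem dualCombo_mem_span {R M : Type*} [Ring R] [AddCommGroup M] [Module R M]
    (X : Fin 14 → M) (j : Fin 14) : dualCombo X j ∈ span R (Set.range X) := by
  have h : ∀ i, X i ∈ span R (Set.range X) := fun i => subset_span (Set.mem_range_self i)
  fin_cases j <;> simp [dualCombo, add_mem, nsmul_mem, h]

theorem map_dualCombo {M N : Type*} [AddCommGroup M] [AddCommGroup N] (g : M →+ N)
    (X : Fin 14 → M) (j : Fin 14) : g (dualCombo X j) = dualCombo (g ∘ X) j := by
  fin_cases j <;> simp [dualCombo]

section OverRing

variable {R S : Type*} [Ring R] [Ring S]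

variable (R) in
def fmlOver (i j : Fin 7) : Matrix (Fin 7) (Fin 7) R :=
  single i j 1 - single (pr7 j) (pr7 i) 1

/-- `2 • XB`, written over any ring with `s` in place of `√2 = 2 / √2`. -/
def twoXBOver (s : R) : Fin 14 → Matrix (Fin 7) (Fin 7) R :=
  let f := fmlOver R
  ![(2 : R) • (f 0 0 - f 1 1), (2 : R) • (f 1 1 - f 2 2),
    (2 : R) • f 0 1, (2 : R) • f 0 2, (2 : R) • f 1 0, (2 : R) • f 1 2, (2 : R) • f 2 0,
    (2 : R) • f 2 1,
    (2 : R) • f 0 3 - s • f 4 1, (2 : R) • f 1 3 - s • f 6 2, (2 : R) • f 2 3 - s • f 5 0,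
    (2 : R) • f 3 0 - s • f 1 4, (2 : R) • f 3 1 - s • f 2 6, (2 : R) • f 3 2 - s • f 0 5]

variable (R) in
def wedgeOver (a b c : Fin 7) : Fin 7 → Fin 7 → Fin 7 → R := fun i j k =>
  (if (i, j, k) = (a, b, c) then 1 else 0) + (if (i, j, k) = (b, c, a) then 1 else 0)
    + (if (i, j, k) = (c, a, b) then 1 else 0) - (if (i, j, k) = (b, a, c) then 1 else 0)
    - (if (i, j, k) = (a, c, b) then 1 else 0) - (if (i, j, k) = (c, b, a) then 1 else 0)

def betaOver (s : R) : Fin 7 → Fin 7 → Fin 7 → R := fun i j k =>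
  wedgeOver R 0 3 6 i j k + wedgeOver R 1 3 5 i j k + wedgeOver R 2 3 4 i j k
    + s * wedgeOver R 0 1 2 i j k + s * wedgeOver R 4 5 6 i j k

theorem map_fmlOver (f : R →+* S) (i j p r : Fin 7) :
    f (fmlOver R i j p r) = fmlOver S i j p r := by
  simp [fmlOver, single_apply, apply_ite f]

theorem map_twoXBOver (f : R →+* S) (s : R) (i : Fin 14) (p r : Fin 7) :
    f (twoXBOver s i p r) = twoXBOver (f s) i p r := by
  fin_cases i <;> simp [twoXBOver, map_fmlOver, map_ofNat]

theorem map_betaOver (f : R →+* S) (s : R) (i j k : Fin 7) :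
    f (betaOver s i j k) = betaOver (f s) i j k := by
  simp [betaOver, wedgeOver, apply_ite f]

theorem trace_twoXBOver_mul_dualCombo : ∀ i j : Fin 14,
    ∑ d : Fin 7, ∑ e : Fin 7,
      twoXBOver (Zsqrtd.sqrtd : ℤ√2) i d e * dualCombo (twoXBOver Zsqrtd.sqrtd) j e d
      = if i = j then 24 else 0 := by
  decide +kernel

theorem sum_twoXBOver_mul_dualCombo : ∀ p q r s : Fin 7,
    ∑ i, twoXBOver (Zsqrtd.sqrtd : ℤ√2) i p r * dualCombo (twoXBOver Zsqrtd.sqrtd) i q s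
      = 4 * ((if (p, q) = (r, s) then 1 else 0) + (if p = s ∧ q = r then 1 else 0)
        - 2 * (if pr7 p = q ∧ pr7 r = s then 1 else 0)
        - ∑ a, betaOver Zsqrtd.sqrtd p q a * betaOver Zsqrtd.sqrtd r s a) := by
  decide +kernel

end OverRing

def sqrtTwoHom : ℤ√2 →+* ℂ :=
  Zsqrtd.lift ⟨sq2, by rw [sq2_mul_self]; norm_num⟩

theorem sqrtTwoHom_sqrtd : sqrtTwoHom Zsqrtd.sqrtd = sq2 := by
  simp [sqrtTwoHom]

theorem twoXBOver_sq2 (i : Fin 14) : twoXBOver sq2 i = (2 : ℂ) • XB i := by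
  have h : (2 : ℂ) * sq2⁻¹ = sq2 := by
    have h0 : sq2 ≠ 0 := left_ne_zero_of_mul (by rw [sq2_mul_self]; norm_num)
    rw [← sq2_mul_self, mul_assoc, mul_inv_cancel₀ h0, mul_one]
  fin_cases i <;> simp [twoXBOver, XB, fml, fmlOver, smul_sub, h]

theorem sqrtTwoHom_twoXBOver (i : Fin 14) (p r : Fin 7) :
    sqrtTwoHom (twoXBOver Zsqrtd.sqrtd i p r) = 2 * XB i p r := by
  rw [map_twoXBOver, sqrtTwoHom_sqrtd, twoXBOver_sq2, Matrix.smul_apply, smul_eq_mul]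

theorem sqrtTwoHom_dualCombo (j : Fin 14) (p r : Fin 7) :
    sqrtTwoHom (dualCombo (twoXBOver Zsqrtd.sqrtd) j p r) = 2 * dualCombo XB j p r := by
  have h₁ := map_dualCombo (sqrtTwoHom.toAddMonoidHom.comp (entryAddMonoidHom (ℤ√2) p r))
    (twoXBOver Zsqrtd.sqrtd) j
  have h₂ := map_dualCombo ((AddMonoidHom.mulLeft (2 : ℂ)).comp (entryAddMonoidHom ℂ p r)) XB j
  simp only [AddMonoidHom.comp_apply, entryAddMonoidHom_apply, RingHom.toAddMonoidHom_eq_coe,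
    AddMonoidHom.coe_coe, AddMonoidHom.coe_mulLeft] at h₁ h₂
  rw [h₁, h₂]
  congr 1
  funext i
  simp [sqrtTwoHom_twoXBOver]

theorem sqrtTwoHom_betaOver (i j k : Fin 7) :
    sqrtTwoHom (betaOver Zsqrtd.sqrtd i j k) = betaC i j k := by
  rw [map_betaOver, sqrtTwoHom_sqrtd]
  rfl

theorem formG_XB_dualCombo (i j : Fin 14) :
    formG (XB i) (dualCombo XB j) = if i = j then 1 else 0 := by
  have h : ∑ d : Fin 7, ∑ e : Fin 7, XB i d e * dualCombo XB j e d
      = 4⁻¹ * sqrtTwoHom (if i = j then 24 else 0) := by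
    simp only [← trace_twoXBOver_mul_dualCombo, map_sum, map_mul, sqrtTwoHom_twoXBOver,
      sqrtTwoHom_dualCombo, Finset.mul_sum]
    ring_nf
  simp only [formG, trace, diag, mul_apply, h]
  split_ifs <;> norm_num [map_ofNat]

theorem sum_XB_mul_dualCombo (p q r s : Fin 7) :
    ∑ i, XB i p r * dualCombo XB i q s
      = (if (p, q) = (r, s) then 1 else 0) + (if p = s ∧ q = r then 1 else 0)
        - 2 * (if pr7 p = q ∧ pr7 r = s then 1 else 0) - ∑ a, betaC p q a * betaC r s a := by
  have h := congrArg sqrtTwoHom (sum_twoXBOver_mul_dualCombo p q r s)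
  simp only [map_sum, map_mul, map_sub, map_add, apply_ite sqrtTwoHom, map_one, map_zero,
    map_ofNat, sqrtTwoHom_twoXBOver, sqrtTwoHom_dualCombo, sqrtTwoHom_betaOver] at h
  have h4 : ∑ i, 2 * XB i p r * (2 * dualCombo XB i q s)
      = 4 * ∑ i, XB i p r * dualCombo XB i q s := by
    rw [Finset.mul_sum]
    exact Finset.sum_congr rfl fun _ _ => by ring
  linear_combination (h - h4) / 4

theorem PP_apply (p q r s : Fin 7) : PP (p, q) (r, s) = if p = s ∧ q = r then 1 else 0 := by
  simp [PP, Matrix.sum_apply, kroneckerMap_apply, single_apply, ite_and, eq_comm]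

theorem QQ_apply (p q r s : Fin 7) :
    QQ (p, q) (r, s) = if pr7 p = q ∧ pr7 r = s then 1 else 0 := by
  simp only [QQ, Matrix.sum_apply, kroneckerMap_apply, single_apply, ite_and, ite_mul, one_mul,
    zero_mul, Finset.sum_ite_eq', Finset.sum_ite_irrel, Finset.mem_univ, if_true,
    Finset.sum_const_zero]

theorem TT_apply (p q r s : Fin 7) :
    TT (p, q) (r, s) = ∑ a : Fin 7, betaC p q a * betaC r s a := by
  simp [TT, Matrix.sum_apply, kroneckerMap_apply, single_apply, ite_and, eq_comm]

open Kronecker in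
/-- the element `Ω = Σᵢ Xⁱ ⊗ Xᵢ ∈ End(ℂ⁷) ⊗ End(ℂ⁷)` (where `X₁,…,X₁₄`
is the basis of `g₂` dual to `X¹,…,X¹⁴` with respect to `⟨X,Y⟩ = (1/6) tr XY`)
satisfies `Ω = 1 + P − 2Q − T`. -/
theorem omega_eq_one_add_P_sub_two_Q_sub_T
    (Xlo : Fin 14 → M7)
    (hmem : ∀ j, Xlo j ∈ Submodule.span ℂ (Set.range XB))
    (hdual : ∀ i j, formG (XB i) (Xlo j) = if i = j then 1 else 0) :
    (∑ i : Fin 14, XB i ⊗ₖ Xlo i) = 1 + PP - (2 : ℂ) • QQ - TT := by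
  obtain rfl : Xlo = dualCombo XB :=
    traceForm_isSymm.eq_of_dual_of_mem_span (dualCombo_mem_span XB) formG_XB_dualCombo hmem hdual
  ext ⟨p, q⟩ ⟨r, s⟩
  simp only [Matrix.sum_apply, kroneckerMap_apply, Matrix.sub_apply, Matrix.add_apply, one_apply,
    Matrix.smul_apply, smul_eq_mul, PP_apply, QQ_apply, TT_apply, sum_XB_mul_dualCombo]
end
end
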